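/- If a countable group Γ admits a faithful homogeneous action by automorphisms on a countable simple graph with property (R), then Γ is icc and Γ is not solvable. -/

import Mathlib

/-!
Property (R) lets a commutator realise any finite partial isomorphism `φ : A → φ A`: choose `k`
moving `φ A` onto a copy with no edges to `A ∪ φ A`, and `h` acting as `φ` on `A` and trivially on
the copy; then `⁅k⁻¹, h⁻¹⁆` acts as `φ` on `A`. Hence every term of the derived series still acts
homogeneously, so it is nontrivial and `Γ` is not solvable. If `g` moves `v`, conjugating `g` by
an element fixing `v` sends `g v` to any of the infinitely many vertices with the same adjacency
to `v`, so `g` has infinitely many conjugates.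
-/

/-- A simple graph has property (R) if for all disjoint finite subsets `U`, `W` of its
vertex set there exists a vertex outside `U ∪ W` adjacent to every vertex of `U` and to
no vertex of `W`. -/
def SimpleGraph.HasPropR {V : Type*} (G : SimpleGraph V) : Prop :=
  ∀ U W : Finset V, Disjoint U W →
    ∃ z, z ∉ U ∧ z ∉ W ∧ (∀ u ∈ U, G.Adj z u) ∧ (∀ w ∈ W, ¬ G.Adj z w)

/-- An action of `Γ` on a graph `G` is homogeneous if every isomorphism between finite
induced subgraphs is realised by a group element. -/
def IsHomogeneousAction {Γ : Type*} [Group Γ] {V : Type*} (G : SimpleGraph V)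
    (ρ : Γ →* (G ≃g G)) : Prop :=
  ∀ (A : Finset V) (φ : V → V), Set.InjOn φ (↑A : Set V) →
    (∀ u ∈ A, ∀ v ∈ A, G.Adj u v ↔ G.Adj (φ u) (φ v)) →
    ∃ g : Γ, ∀ u ∈ A, ρ g u = φ u

namespace SimpleGraph

variable {V : Type*} {G : SimpleGraph V}

def IsPartialIso (G : SimpleGraph V) (A : Finset V) (φ : V → V) : Prop :=
  Set.InjOn φ A ∧ ∀ u ∈ A, ∀ v ∈ A, G.Adj u v ↔ G.Adj (φ u) (φ v)

theorem isPartialIso_id (A : Finset V) : G.IsPartialIso A id :=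
  ⟨Set.injOn_id _, fun _ _ _ _ => Iff.rfl⟩

theorem isPartialIso_singleton (a : V) (φ : V → V) : G.IsPartialIso {a} φ := by
  refine ⟨by simp, ?_⟩
  simp only [Finset.mem_singleton, forall_eq, SimpleGraph.irrefl]

theorem IsPartialIso.piecewise [DecidableEq V] {A B : Finset V} {φ ψ : V → V}
    (hφ : G.IsPartialIso A φ) (hψ : G.IsPartialIso B ψ) (hAB : Disjoint A B)
    (himg : ∀ a ∈ A, ∀ b ∈ B, φ a ≠ ψ b)
    (hadj : ∀ a ∈ A, ∀ b ∈ B, G.Adj a b ↔ G.Adj (φ a) (ψ b)) :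
    G.IsPartialIso (A ∪ B) (A.piecewise φ ψ) := by
  have hB : ∀ b ∈ B, b ∉ A := fun b hb ha => Finset.disjoint_left.mp hAB ha hb
  refine ⟨?_, ?_⟩
  · intro x hx y hy hxy
    simp only [Finset.coe_union, Set.mem_union, Finset.mem_coe] at hx hy
    rcases hx with hx | hx <;> rcases hy with hy | hy
    · simp only [Finset.piecewise_eq_of_mem _ _ _ hx, Finset.piecewise_eq_of_mem _ _ _ hy] at hxy
      exact hφ.1 hx hy hxy
    · simp only [Finset.piecewise_eq_of_mem _ _ _ hx,
        Finset.piecewise_eq_of_notMem _ _ _ (hB y hy)] at hxy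
      exact absurd hxy (himg x hx y hy)
    · simp only [Finset.piecewise_eq_of_notMem _ _ _ (hB x hx),
        Finset.piecewise_eq_of_mem _ _ _ hy] at hxy
      exact absurd hxy.symm (himg y hy x hx)
    · simp only [Finset.piecewise_eq_of_notMem _ _ _ (hB x hx),
        Finset.piecewise_eq_of_notMem _ _ _ (hB y hy)] at hxy
      exact hψ.1 hx hy hxy
  · intro x hx y hy
    rcases Finset.mem_union.mp hx with hx | hx <;> rcases Finset.mem_union.mp hy with hy | hy
    · rw [Finset.piecewise_eq_of_mem _ _ _ hx, Finset.piecewise_eq_of_mem _ _ _ hy]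
      exact hφ.2 x hx y hy
    · rw [Finset.piecewise_eq_of_mem _ _ _ hx, Finset.piecewise_eq_of_notMem _ _ _ (hB y hy)]
      exact hadj x hx y hy
    · rw [Finset.piecewise_eq_of_notMem _ _ _ (hB x hx), Finset.piecewise_eq_of_mem _ _ _ hy,
        G.adj_comm x, G.adj_comm (ψ x)]
      exact hadj y hy x hx
    · rw [Finset.piecewise_eq_of_notMem _ _ _ (hB x hx),
        Finset.piecewise_eq_of_notMem _ _ _ (hB y hy)]
      exact hψ.2 x hx y hy

namespace HasPropR

theorem exists_adj_iff (hR : G.HasPropR) (T : Finset V) (P : V → Prop) :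
    ∃ z ∉ T, ∀ t ∈ T, G.Adj z t ↔ P t := by
  classical
  obtain ⟨z, hzU, hzW, hU, hW⟩ :=
    hR (T.filter P) (T.filter (¬ P ·)) (Finset.disjoint_filter_filter_not T T P)
  refine ⟨z, fun hz => ?_, fun t ht => ⟨fun hzt => ?_, fun hPt => hU t (by simp [ht, hPt])⟩⟩
  · by_cases hPz : P z
    · exact hzU (by simp [hz, hPz])
    · exact hzW (by simp [hz, hPz])
  · by_contra hPt
    exact hW t (by simp [ht, hPt]) hzt

theorem nontrivial (hR : G.HasPropR) : Nontrivial V := by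
  obtain ⟨u, -, -⟩ := hR.exists_adj_iff ∅ (fun _ => False)
  obtain ⟨z, hz, -⟩ := hR.exists_adj_iff {u} (fun _ => False)
  exact ⟨⟨z, u, by simpa using hz⟩⟩

theorem exists_isolated_copy (hR : G.HasPropR) (S T : Finset V) :
    ∃ θ : V → V, G.IsPartialIso S θ ∧ ∀ x ∈ S, θ x ∉ T ∧ ∀ t ∈ T, ¬ G.Adj t (θ x) := by
  classical
  induction S using Finset.induction_on with
  | empty => exact ⟨id, isPartialIso_id ∅, by simp⟩
  | @insert a S ha ih =>
    obtain ⟨θ, hθ, hθT⟩ := ih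
    obtain ⟨z, hz, hzadj⟩ := hR.exists_adj_iff (T ∪ S.image θ)
      (fun t => ∃ y ∈ S, θ y = t ∧ G.Adj a y)
    have hzT : z ∉ T := fun h => hz (Finset.mem_union_left _ h)
    have hzθ : ∀ y ∈ S, z ≠ θ y := fun y hy h =>
      hz (Finset.mem_union_right _ (h ▸ Finset.mem_image_of_mem θ hy))
    have hadj : ∀ y ∈ S, G.Adj a y ↔ G.Adj z (θ y) := by
      intro y hy
      rw [hzadj _ (Finset.mem_union_right _ (Finset.mem_image_of_mem θ hy))]
      exact ⟨fun h => ⟨y, hy, rfl, h⟩, fun ⟨y', hy', he, h⟩ => hθ.1 hy' hy he ▸ h⟩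
    refine ⟨({a} : Finset V).piecewise (fun _ => z) θ, Finset.insert_eq a S ▸
      (isPartialIso_singleton a _).piecewise hθ (by simpa using ha) (by simpa using hzθ)
        (by simpa using hadj), ?_⟩
    intro x hx
    rcases Finset.mem_insert.mp hx with rfl | hx
    · rw [Finset.piecewise_eq_of_mem _ _ _ (Finset.mem_singleton_self x)]
      refine ⟨hzT, fun t ht hzt => ?_⟩
      obtain ⟨y, hy, rfl, -⟩ := (hzadj t (Finset.mem_union_left _ ht)).mp hzt.symm
      exact (hθT y hy).1 ht
    · rw [Finset.piecewise_eq_of_notMem _ _ _ (by simpa using fun h : x = a => ha (h ▸ hx))]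
      exact hθT x hx

end HasPropR

end SimpleGraph

open SimpleGraph

namespace IsHomogeneousAction

variable {Γ : Type*} [Group Γ] {V : Type*} {G : SimpleGraph V} {ρ : Γ →* (G ≃g G)}

theorem exists_mem {H : Subgroup Γ} (hH : IsHomogeneousAction G (ρ.comp H.subtype))
    {A : Finset V} {φ : V → V} (hφ : G.IsPartialIso A φ) :
    ∃ g ∈ H, ∀ u ∈ A, ρ g u = φ u := by
  obtain ⟨g, hg⟩ := hH A φ hφ.1 hφ.2
  exact ⟨g, g.2, hg⟩

theorem nontrivial [Nontrivial V] (hhom : IsHomogeneousAction G ρ) : Nontrivial Γ := by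
  obtain ⟨u, z, hne⟩ := exists_pair_ne V
  have hφ : G.IsPartialIso {u} (fun _ => z) := isPartialIso_singleton u _
  obtain ⟨g, hg⟩ := hhom {u} (fun _ => z) hφ.1 hφ.2
  refine ⟨⟨g, 1, fun h => hne ?_⟩⟩
  simpa [h] using hg u (Finset.mem_singleton_self u)

open scoped commutatorElement in
theorem commutator (hR : G.HasPropR) {H : Subgroup Γ}
    (hH : IsHomogeneousAction G (ρ.comp H.subtype)) :
    IsHomogeneousAction G (ρ.comp ⁅H, H⁆.subtype) := by
  classical
  intro A φ hinj hadj
  have hφ : G.IsPartialIso A φ := ⟨hinj, hadj⟩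
  obtain ⟨θ, hθ, hθT⟩ := hR.exists_isolated_copy (A.image φ) (A ∪ A.image φ)
  obtain ⟨k, hkH, hk⟩ := hH.exists_mem hθ
  have hcopy : ∀ a ∈ A, ∀ b ∈ (A.image φ).image θ, a ≠ b ∧ φ a ≠ b ∧
      ¬ G.Adj a b ∧ ¬ G.Adj (φ a) b := by
    intro a ha b hb
    obtain ⟨c, hc, rfl⟩ := Finset.mem_image.mp hb
    have haT : a ∈ A ∪ A.image φ := Finset.mem_union_left _ ha
    have hφaT : φ a ∈ A ∪ A.image φ := Finset.mem_union_right _ (Finset.mem_image_of_mem φ ha)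
    exact ⟨fun h => (hθT c hc).1 (h ▸ haT), fun h => (hθT c hc).1 (h ▸ hφaT),
      (hθT c hc).2 a haT, (hθT c hc).2 (φ a) hφaT⟩
  obtain ⟨h, hhH, hh⟩ := hH.exists_mem (hφ.piecewise (isPartialIso_id _)
    (Finset.disjoint_left.mpr fun _ ha hb => (hcopy _ ha _ hb).1 rfl)
    (fun a ha b hb => (hcopy a ha b hb).2.1)
    (fun a ha b hb => iff_of_false (hcopy a ha b hb).2.2.1 (hcopy a ha b hb).2.2.2))
  refine ⟨⟨⁅k⁻¹, h⁻¹⁆, Subgroup.commutator_mem_commutator (inv_mem hkH) (inv_mem hhH)⟩,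
    fun a ha => ?_⟩
  have hθφa : θ (φ a) ∈ (A.image φ).image θ :=
    Finset.mem_image_of_mem θ (Finset.mem_image_of_mem φ ha)
  have hha : ρ h a = φ a := by
    simpa [Finset.piecewise_eq_of_mem _ _ _ ha] using hh a (Finset.mem_union_left _ ha)
  have hkφa : ρ k (φ a) = θ (φ a) := hk (φ a) (Finset.mem_image_of_mem φ ha)
  have hhθφa : ρ h (θ (φ a)) = θ (φ a) := by
    have hnA : θ (φ a) ∉ A := fun h' => (hcopy _ h' _ hθφa).1 rfl
    simpa [Finset.piecewise_eq_of_notMem _ _ _ hnA] using hh _ (Finset.mem_union_right _ hθφa)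
  calc ρ ⁅k⁻¹, h⁻¹⁆ a = (ρ k)⁻¹ ((ρ h)⁻¹ (ρ k (ρ h a))) := by
        simp [commutatorElement_def, RelIso.mul_apply]
    _ = φ a := by
        rw [hha, hkφa, ← hhθφa, RelIso.inv_apply_self, ← hkφa, RelIso.inv_apply_self]

theorem derivedSeries (hR : G.HasPropR) (hhom : IsHomogeneousAction G ρ) (n : ℕ) :
    IsHomogeneousAction G (ρ.comp (derivedSeries Γ n).subtype) := by
  induction n with
  | zero =>
    intro A φ hinj hadj
    obtain ⟨g, hg⟩ := hhom A φ hinj hadj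
    exact ⟨⟨g, Subgroup.mem_top g⟩, hg⟩
  | succ n ih => exact derivedSeries_succ Γ n ▸ ih.commutator hR

theorem not_isSolvable (hR : G.HasPropR) (hhom : IsHomogeneousAction G ρ) :
    ¬ Group.IsSolvable Γ := by
  rintro ⟨n, hn⟩
  have := hR.nontrivial
  exact (Subgroup.nontrivial_iff_ne_bot _).mp (hhom.derivedSeries hR n).nontrivial hn

theorem infinite_conjugatesOf (hR : G.HasPropR) (hfaith : Function.Injective ρ)
    (hhom : IsHomogeneousAction G ρ) {g : Γ} (hg : g ≠ 1) : (conjugatesOf g).Infinite := by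
  classical
  obtain ⟨v, hv⟩ : ∃ v, ρ g v ≠ v := by
    by_contra! hfix
    exact hg (hfaith (by ext x; simpa using hfix x))
  intro hfin
  obtain ⟨z, hz, hzadj⟩ := hR.exists_adj_iff (insert v (hfin.image (ρ · v)).toFinset)
    (fun t => t = v ∧ G.Adj (ρ g v) v)
  have hzv : z ≠ v := fun h => hz (h ▸ Finset.mem_insert_self _ _)
  have hzadj_v : G.Adj v (ρ g v) ↔ G.Adj v z := by
    rw [G.adj_comm v z, hzadj v (Finset.mem_insert_self _ _), G.adj_comm]
    exact ⟨fun h => ⟨rfl, h⟩, And.right⟩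
  have hφ : G.IsPartialIso ({v} ∪ {ρ g v}) (({v} : Finset V).piecewise id (fun _ => z)) :=
    (isPartialIso_id _).piecewise (isPartialIso_singleton _ _) (by simpa using hv.symm)
      (by simpa using hzv.symm) (by simpa using hzadj_v)
  obtain ⟨k, hk⟩ := hhom _ _ hφ.1 hφ.2
  have hkv : (ρ k)⁻¹ v = v := by
    conv_lhs => rw [← (by simpa using hk v (by simp) : ρ k v = v)]
    exact RelIso.inv_apply_self _ _
  have hkgv : ρ k (ρ g v) = z := by simpa [hv] using hk (ρ g v) (by simp)
  have hconj : ρ (k * g * k⁻¹) v = z := by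
    rw [map_mul, map_mul, RelIso.mul_apply, RelIso.mul_apply, map_inv, hkv, hkgv]
  exact hz (Finset.mem_insert_of_mem (by
    simpa [hconj] using ⟨k * g * k⁻¹, isConj_iff.mpr ⟨k, rfl⟩, hconj⟩))

end IsHomogeneousAction

theorem icc_and_not_solvable_general {Γ : Type*} [Group Γ] {V : Type*}
    (R : SimpleGraph V) (hR : R.HasPropR) (ρ : Γ →* (R ≃g R))
    (hfaith : Function.Injective ρ) (hhom : IsHomogeneousAction R ρ) :
    (∀ g : Γ, g ≠ 1 → {h : Γ | ∃ k : Γ, k * g * k⁻¹ = h}.Infinite) ∧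
      ¬ IsSolvable Γ :=
  ⟨fun g hg => by simpa [conjugatesOf, isConj_iff] using hhom.infinite_conjugatesOf hR hfaith hg,
    hhom.not_isSolvable hR⟩

/-- A countable group admitting a faithful homogeneous action on a countable graph
with property (R) is icc and not solvable. -/
theorem icc_and_not_solvable {Γ : Type*} [Group Γ] [Countable Γ] {V : Type*} [Countable V]
    (R : SimpleGraph V) (hR : R.HasPropR) (ρ : Γ →* (R ≃g R))
    (hfaith : Function.Injective ρ) (hhom : IsHomogeneousAction R ρ) :
    (∀ g : Γ, g ≠ 1 → {h : Γ | ∃ k : Γ, k * g * k⁻¹ = h}.Infinite) ∧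
      ¬ IsSolvable Γ :=
  icc_and_not_solvable_general R hR ρ hfaith hhom
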